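/- arXiv:2603.28671 — 3 statements merged into one kernel-verified Lean document; each statement's English description precedes it below -/
import Mathlib

section
/- Let (Ω, ℱ, P) be a probability space, 𝒢 ⊆ ℱ a sub-σ-algebra, and for each m ∈ ℕ let X_m, Y_m : Ω → ℝ^d be square-integrable random vectors with X_m and Y_m conditionally independent given 𝒢. Let c ∈ ℝ^d and assume E[Y_m|𝒢] → c in L²(P; ℝ^d) as m → ∞. Define J_m := E‖X_m − Y_m‖² and C_m := E‖Y_m − E[Y_m|𝒢]‖². Then: (i) if J_m − C_m → 0 as m → ∞, then E‖X_m − E[X_m|𝒢]‖² → 0 and E‖E[X_m|𝒢] − c‖² → 0 (i.e., any asymptotically optimal forecast must have vanishing predictive spread and predictive mean converging in L² to the climatological constant c); and (ii) conversely, the constant deterministic forecast X_m ≡ c achieves J_m − C_m → 0. (This is the long-lead degeneracy of mean-squared-error training asserted in Proposition 1.) -/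
open MeasureTheory ProbabilityTheory Filter Topology

namespace LongLeadAux

set_option linter.unusedSectionVars false

variable {Ω : Type*} {𝒢 mΩ : MeasurableSpace Ω} {μ : Measure Ω} [IsProbabilityMeasure μ]

lemma integrable_mul₂ {f g : Ω → ℝ} (hf : MemLp f 2 μ) (hg : MemLp g 2 μ) :
    Integrable (fun ω => f ω * g ω) μ := by
  have h := L2.integrable_inner (𝕜 := ℝ) (hf.toLp f) (hg.toLp g)
  refine (integrable_congr ?_).mp h
  filter_upwards [hf.coeFn_toLp, hg.coeFn_toLp] with ω h1 h2
  simp [h1, h2, RCLike.inner_apply, mul_comm]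

lemma condexp_ae_eq_condexpL2 {E : Type*} [NormedAddCommGroup E] [InnerProductSpace ℝ E]
    [CompleteSpace E] (h𝒢 : 𝒢 ≤ mΩ) {f : Ω → E} (hf : MemLp f 2 μ) :
    μ[f|𝒢] =ᵐ[μ] (condExpL2 E ℝ h𝒢 (hf.toLp f) : Ω →₂[μ] E) := by
  haveI : IsFiniteMeasure (μ.trim h𝒢) := isFiniteMeasure_trim h𝒢
  refine (ae_eq_condExp_of_forall_setIntegral_eq h𝒢 (hf.integrable one_le_two)
    (fun s _ hμs => integrableOn_condExpL2_of_measure_ne_top h𝒢 hμs.ne _)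
    (fun s hs hμs => ?_) (aestronglyMeasurable_condExpL2 h𝒢 _)).symm
  exact (integral_condExpL2_eq h𝒢 (hf.toLp f) hs hμs.ne).trans
    (setIntegral_congr_ae (h𝒢 s hs) (hf.coeFn_toLp.mono fun ω h _ => h))

lemma memℒp_two_condexp {E : Type*} [NormedAddCommGroup E] [InnerProductSpace ℝ E]
    [CompleteSpace E] (h𝒢 : 𝒢 ≤ mΩ) {f : Ω → E} (hf : MemLp f 2 μ) :
    MemLp (μ[f|𝒢]) 2 μ :=
  (Lp.memLp _).ae_eq (condexp_ae_eq_condexpL2 h𝒢 hf).symm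

lemma memℒp_coord {d : ℕ} {U : Ω → EuclideanSpace ℝ (Fin d)} (hU : MemLp U 2 μ) (i : Fin d) :
    MemLp (fun ω => U ω i) 2 μ := by
  simpa [Function.comp_def] using
    (EuclideanSpace.proj (𝕜 := ℝ) i).comp_memLp' hU

lemma int_sq {f : Ω → ℝ} (hf : MemLp f 2 μ) : Integrable (fun ω => f ω ^ 2) μ := by
  simpa [pow_two] using integrable_mul₂ hf hf

lemma condexp_coord (h𝒢 : 𝒢 ≤ mΩ) {d : ℕ} {Z : Ω → EuclideanSpace ℝ (Fin d)}
    (hZ : Integrable Z μ) (i : Fin d) :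
    (fun ω => (μ[Z|𝒢]) ω i) =ᵐ[μ] μ[fun ω => Z ω i|𝒢] := by
  haveI : IsFiniteMeasure (μ.trim h𝒢) := isFiniteMeasure_trim h𝒢
  refine ae_eq_condExp_of_forall_setIntegral_eq h𝒢
    ((EuclideanSpace.proj (𝕜 := ℝ) i).integrable_comp hZ) ?_ ?_ ?_
  · intro s _ _
    exact ((EuclideanSpace.proj (𝕜 := ℝ) i).integrable_comp integrable_condExp).integrableOn
  · intro s hs hμs
    have h1 := (EuclideanSpace.proj (𝕜 := ℝ) i).integral_comp_comm
      (integrable_condExp (f := Z) (m := 𝒢)).integrableOn (μ := μ.restrict s)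
    have h2 := (EuclideanSpace.proj (𝕜 := ℝ) i).integral_comp_comm
      hZ.integrableOn (μ := μ.restrict s)
    show ∫ x in s, (EuclideanSpace.proj (𝕜 := ℝ) i) ((μ[Z|𝒢]) x) ∂μ
      = ∫ x in s, (EuclideanSpace.proj (𝕜 := ℝ) i) (Z x) ∂μ
    rw [h1, h2, setIntegral_condExp h𝒢 hZ hs]
  · exact ((EuclideanSpace.proj (𝕜 := ℝ) i).continuous.comp_stronglyMeasurable
      stronglyMeasurable_condExp).aestronglyMeasurable

lemma integral_pullout (h𝒢 : 𝒢 ≤ mΩ) {f g : Ω → ℝ} (hfm : StronglyMeasurable[𝒢] f)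
    (hg : Integrable g μ) (hfg : Integrable (fun ω => f ω * g ω) μ) :
    ∫ ω, f ω * g ω ∂μ = ∫ ω, f ω * (μ[g|𝒢]) ω ∂μ := by
  haveI : IsFiniteMeasure (μ.trim h𝒢) := isFiniteMeasure_trim h𝒢
  have h1 : ∫ ω, f ω * g ω ∂μ = ∫ ω, (μ[fun ω' => f ω' * g ω'|𝒢]) ω ∂μ :=
    (integral_condExp h𝒢).symm
  rw [h1]
  refine integral_congr_ae ?_
  have := condExp_mul_of_stronglyMeasurable_left (μ := μ) hfm (by exact hfg) hg
  filter_upwards [this] with ω hω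
  exact hω

lemma orth (h𝒢 : 𝒢 ≤ mΩ) {b g : Ω → ℝ} (hbm : StronglyMeasurable[𝒢] b)
    (hb : MemLp b 2 μ) (hg : MemLp g 2 μ) :
    ∫ ω, b ω * (g ω - (μ[g|𝒢]) ω) ∂μ = 0 := by
  have h1 := integral_pullout h𝒢 hbm (hg.integrable one_le_two) (integrable_mul₂ hb hg)
  simp_rw [mul_sub]
  rw [integral_sub (integrable_mul₂ hb hg)
    (integrable_mul₂ hb (memℒp_two_condexp h𝒢 hg)), h1, sub_self]

noncomputable def trunc (n : ℕ) (t : ℝ) : ℝ := max (-(n : ℝ)) (min t (n : ℝ))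

lemma trunc_abs_le (n : ℕ) (t : ℝ) : |trunc n t| ≤ (n : ℝ) := by
  have hn : (0 : ℝ) ≤ n := Nat.cast_nonneg n
  rw [abs_le]
  unfold trunc
  constructor
  · exact le_max_left _ _
  · exact max_le (by linarith) ((min_le_right _ _))

lemma trunc_abs_le_abs (n : ℕ) (t : ℝ) : |trunc n t| ≤ |t| := by
  have hn : (0 : ℝ) ≤ n := Nat.cast_nonneg n
  rcases le_total 0 t with h | h
  · have h1 : trunc n t = min t n := max_eq_right (by
      have : (0:ℝ) ≤ min t n := le_min h hn
      linarith)
    rw [h1, abs_of_nonneg (le_min h hn), abs_of_nonneg h]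
    exact min_le_left _ _
  · have h1 : min t (n : ℝ) = t := min_eq_left (by linarith)
    rw [trunc, h1, abs_of_nonpos (by
      have : max (-(n:ℝ)) t ≤ 0 := max_le (by linarith) h
      exact this), abs_of_nonpos h]
    have : t ≤ max (-(n:ℝ)) t := le_max_right _ _
    linarith [neg_le_neg this]

lemma trunc_eq_of_le {n : ℕ} {t : ℝ} (h : |t| ≤ n) : trunc n t = t := by
  rw [abs_le] at h
  rw [trunc, min_eq_left h.2, max_eq_right h.1]

lemma trunc_tendsto (t : ℝ) : Tendsto (fun n : ℕ => trunc n t) atTop (𝓝 t) := by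
  refine tendsto_atTop_of_eventually_const (i₀ := ⌈|t|⌉₊) fun n hn => ?_
  exact trunc_eq_of_le ((Nat.le_ceil _).trans (Nat.cast_le.mpr hn))

lemma trunc_measurable (n : ℕ) : Measurable (trunc n) :=
  measurable_const.max (measurable_id.min measurable_const)

lemma ci_cross_zero (h𝒢 : 𝒢 ≤ mΩ) {d : ℕ} {X₀ Y₀ : Ω → EuclideanSpace ℝ (Fin d)}
    (hXm : Measurable X₀) (hYm : Measurable Y₀)
    (hX2 : MemLp X₀ 2 μ) (hY2 : MemLp Y₀ 2 μ)
    (hCI : ∀ f g : EuclideanSpace ℝ (Fin d) → ℝ, Measurable f → Measurable g →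
      (∃ Cf, ∀ x, |f x| ≤ Cf) → (∃ Cg, ∀ x, |g x| ≤ Cg) →
      μ[fun ω => f (X₀ ω) * g (Y₀ ω) | 𝒢] =ᵐ[μ]
        fun ω => (μ[fun ω' => f (X₀ ω') | 𝒢]) ω * (μ[fun ω' => g (Y₀ ω') | 𝒢]) ω)
    (i : Fin d) :
    ∫ ω, (X₀ ω i - (μ[fun ω' => X₀ ω' i|𝒢]) ω) * (Y₀ ω i - (μ[fun ω' => Y₀ ω' i|𝒢]) ω) ∂μ
      = 0 := by
  haveI : IsFiniteMeasure (μ.trim h𝒢) := isFiniteMeasure_trim h𝒢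
  have hproj : Measurable fun v : EuclideanSpace ℝ (Fin d) => v i :=
    (EuclideanSpace.proj (𝕜 := ℝ) i).continuous.measurable
  set x : Ω → ℝ := fun ω => X₀ ω i with hxdef
  set y : Ω → ℝ := fun ω => Y₀ ω i with hydef
  have hx2 : MemLp x 2 μ := memℒp_coord hX2 i
  have hy2 : MemLp y 2 μ := memℒp_coord hY2 i
  have hxm : Measurable x := hproj.comp hXm
  have hym : Measurable y := hproj.comp hYm
  have hpy2 : MemLp (μ[y|𝒢]) 2 μ := memℒp_two_condexp h𝒢 hy2
  have hpx2 : MemLp (μ[x|𝒢]) 2 μ := memℒp_two_condexp h𝒢 hx2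
  have hpym : Measurable (μ[y|𝒢]) := (stronglyMeasurable_condExp.mono h𝒢).measurable
  -- Stage A : for every bounded measurable f,
  -- `∫ f(X₀) y = ∫ f(X₀) E[y|𝒢]`
  have stageA : ∀ (f : EuclideanSpace ℝ (Fin d) → ℝ) (Cf : ℝ), Measurable f →
      (∀ v, |f v| ≤ Cf) →
      ∫ ω, f (X₀ ω) * y ω ∂μ = ∫ ω, f (X₀ ω) * (μ[y|𝒢]) ω ∂μ := by
    intro f Cf hfm hfb
    set F : Ω → ℝ := fun ω => f (X₀ ω) with hFdef
    have hFm : Measurable F := hfm.comp hXm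
    have hF2 : MemLp F 2 μ := MemLp.of_bound hFm.aestronglyMeasurable Cf
      (Filter.Eventually.of_forall fun ω => by
        simpa [Real.norm_eq_abs] using hfb (X₀ ω))
    have hpF2 : MemLp (μ[F|𝒢]) 2 μ := memℒp_two_condexp h𝒢 hF2
    have hpFm : Measurable (μ[F|𝒢]) := (stronglyMeasurable_condExp.mono h𝒢).measurable
    set G : ℕ → Ω → ℝ := fun n ω => trunc n (y ω) with hGdef
    have hGm : ∀ n, Measurable (G n) := fun n => (trunc_measurable n).comp hym
    have hG2 : ∀ n, MemLp (G n) 2 μ := fun n =>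
      MemLp.of_bound (hGm n).aestronglyMeasurable (n : ℝ)
        (Filter.Eventually.of_forall fun ω => by
          simpa [Real.norm_eq_abs] using trunc_abs_le n (y ω))
    have step1 : ∀ n, ∫ ω, F ω * G n ω ∂μ = ∫ ω, (μ[F|𝒢]) ω * G n ω ∂μ := by
      intro n
      have hci := hCI f (fun v => trunc n (v i)) hfm ((trunc_measurable n).comp hproj)
        ⟨Cf, hfb⟩ ⟨(n : ℝ), fun v => trunc_abs_le n (v i)⟩
      have h1 : ∫ ω, F ω * G n ω ∂μ
          = ∫ ω, (μ[fun ω' => F ω' * G n ω'|𝒢]) ω ∂μ := (integral_condExp h𝒢).symm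
      rw [h1, integral_congr_ae hci]
      exact (integral_pullout h𝒢 stronglyMeasurable_condExp
        ((hG2 n).integrable one_le_two) (integrable_mul₂ hpF2 (hG2 n))).symm
    have L1 : Tendsto (fun n => ∫ ω, F ω * G n ω ∂μ) atTop (𝓝 (∫ ω, F ω * y ω ∂μ)) := by
      refine tendsto_integral_of_dominated_convergence (fun ω => |F ω * y ω|)
        (fun n => (hFm.mul (hGm n)).aestronglyMeasurable)
        (integrable_mul₂ hF2 hy2).abs
        (fun n => Filter.Eventually.of_forall fun ω => ?_)
        (Filter.Eventually.of_forall fun ω =>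
          tendsto_const_nhds.mul (trunc_tendsto (y ω)))
      simp only [Real.norm_eq_abs, abs_mul]
      exact mul_le_mul_of_nonneg_left (trunc_abs_le_abs n (y ω)) (abs_nonneg _)
    have R1 : Tendsto (fun n => ∫ ω, (μ[F|𝒢]) ω * G n ω ∂μ) atTop
        (𝓝 (∫ ω, (μ[F|𝒢]) ω * y ω ∂μ)) := by
      refine tendsto_integral_of_dominated_convergence (fun ω => |(μ[F|𝒢]) ω * y ω|)
        (fun n => (hpFm.mul (hGm n)).aestronglyMeasurable)
        (integrable_mul₂ hpF2 hy2).abs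
        (fun n => Filter.Eventually.of_forall fun ω => ?_)
        (Filter.Eventually.of_forall fun ω =>
          tendsto_const_nhds.mul (trunc_tendsto (y ω)))
      simp only [Real.norm_eq_abs, abs_mul]
      exact mul_le_mul_of_nonneg_left (trunc_abs_le_abs n (y ω)) (abs_nonneg _)
    have h2 : ∫ ω, F ω * y ω ∂μ = ∫ ω, (μ[F|𝒢]) ω * y ω ∂μ :=
      tendsto_nhds_unique ((funext step1 : _) ▸ L1) R1
    have e3 : ∫ ω, (μ[F|𝒢]) ω * y ω ∂μ = ∫ ω, (μ[F|𝒢]) ω * (μ[y|𝒢]) ω ∂μ :=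
      integral_pullout h𝒢 stronglyMeasurable_condExp (hy2.integrable one_le_two)
        (integrable_mul₂ hpF2 hy2)
    have e4 : ∫ ω, (μ[y|𝒢]) ω * F ω ∂μ = ∫ ω, (μ[y|𝒢]) ω * (μ[F|𝒢]) ω ∂μ :=
      integral_pullout h𝒢 stronglyMeasurable_condExp (hF2.integrable one_le_two)
        (integrable_mul₂ hpy2 hF2)
    have comm1 : ∫ ω, F ω * (μ[y|𝒢]) ω ∂μ = ∫ ω, (μ[y|𝒢]) ω * F ω ∂μ := by
      simp_rw [mul_comm]
    have comm2 : ∫ ω, (μ[y|𝒢]) ω * (μ[F|𝒢]) ω ∂μ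
        = ∫ ω, (μ[F|𝒢]) ω * (μ[y|𝒢]) ω ∂μ := by simp_rw [mul_comm]
    rw [h2, e3, ← comm2, ← e4, ← comm1]
  -- Stage B : upgrade to the L² coordinate itself
  have stepB : ∀ n : ℕ, ∫ ω, trunc n (x ω) * y ω ∂μ
      = ∫ ω, trunc n (x ω) * (μ[y|𝒢]) ω ∂μ := fun n =>
    stageA (fun v => trunc n (v i)) (n : ℝ) ((trunc_measurable n).comp hproj)
      (fun v => trunc_abs_le n (v i))
  have LB : Tendsto (fun n => ∫ ω, trunc n (x ω) * y ω ∂μ) atTop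
      (𝓝 (∫ ω, x ω * y ω ∂μ)) := by
    refine tendsto_integral_of_dominated_convergence (fun ω => |x ω * y ω|)
      (fun n => (((trunc_measurable n).comp hxm).mul hym).aestronglyMeasurable)
      (integrable_mul₂ hx2 hy2).abs
      (fun n => Filter.Eventually.of_forall fun ω => ?_)
      (Filter.Eventually.of_forall fun ω =>
        (trunc_tendsto (x ω)).mul tendsto_const_nhds)
    simp only [Real.norm_eq_abs, abs_mul]
    exact mul_le_mul_of_nonneg_right (trunc_abs_le_abs n (x ω)) (abs_nonneg _)
  have RB : Tendsto (fun n => ∫ ω, trunc n (x ω) * (μ[y|𝒢]) ω ∂μ) atTop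
      (𝓝 (∫ ω, x ω * (μ[y|𝒢]) ω ∂μ)) := by
    refine tendsto_integral_of_dominated_convergence (fun ω => |x ω * (μ[y|𝒢]) ω|)
      (fun n => (((trunc_measurable n).comp hxm).mul hpym).aestronglyMeasurable)
      (integrable_mul₂ hx2 hpy2).abs
      (fun n => Filter.Eventually.of_forall fun ω => ?_)
      (Filter.Eventually.of_forall fun ω =>
        (trunc_tendsto (x ω)).mul tendsto_const_nhds)
    simp only [Real.norm_eq_abs, abs_mul]
    exact mul_le_mul_of_nonneg_right (trunc_abs_le_abs n (x ω)) (abs_nonneg _)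
  have eB : ∫ ω, x ω * y ω ∂μ = ∫ ω, x ω * (μ[y|𝒢]) ω ∂μ :=
    tendsto_nhds_unique ((funext stepB : _) ▸ LB) RB
  have hsplit : ∀ ω, (x ω - (μ[x|𝒢]) ω) * (y ω - (μ[y|𝒢]) ω)
      = x ω * (y ω - (μ[y|𝒢]) ω) - (μ[x|𝒢]) ω * (y ω - (μ[y|𝒢]) ω) := fun ω => by ring
  rw [integral_congr_ae (Filter.Eventually.of_forall hsplit :
    (fun ω => (x ω - (μ[x|𝒢]) ω) * (y ω - (μ[y|𝒢]) ω)) =ᵐ[μ]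
      fun ω => x ω * (y ω - (μ[y|𝒢]) ω) - (μ[x|𝒢]) ω * (y ω - (μ[y|𝒢]) ω))]
  have hi1 : Integrable (fun ω => x ω * (y ω - (μ[y|𝒢]) ω)) μ := by
    simpa using integrable_mul₂ hx2 (hy2.sub hpy2)
  have hi2 : Integrable (fun ω => (μ[x|𝒢]) ω * (y ω - (μ[y|𝒢]) ω)) μ := by
    simpa using integrable_mul₂ hpx2 (hy2.sub hpy2)
  rw [integral_sub hi1 hi2]
  have second : ∫ ω, (μ[x|𝒢]) ω * (y ω - (μ[y|𝒢]) ω) ∂μ = 0 :=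
    orth h𝒢 stronglyMeasurable_condExp hpx2 hy2
  have first : ∫ ω, x ω * (y ω - (μ[y|𝒢]) ω) ∂μ = 0 := by
    simp_rw [mul_sub]
    rw [integral_sub (integrable_mul₂ hx2 hy2) (integrable_mul₂ hx2 hpy2), eB, sub_self]
  rw [first, second, sub_self]

lemma pyth (h𝒢 : 𝒢 ≤ mΩ) {x y : Ω → ℝ} (hx2 : MemLp x 2 μ) (hy2 : MemLp y 2 μ)
    (hcross : ∫ ω, (x ω - (μ[x|𝒢]) ω) * (y ω - (μ[y|𝒢]) ω) ∂μ = 0) :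
    ∫ ω, (x ω - y ω) ^ 2 ∂μ
      = (∫ ω, (x ω - (μ[x|𝒢]) ω) ^ 2 ∂μ)
        + (∫ ω, ((μ[x|𝒢]) ω - (μ[y|𝒢]) ω) ^ 2 ∂μ)
        + (∫ ω, (y ω - (μ[y|𝒢]) ω) ^ 2 ∂μ) := by
  have hpx2 : MemLp (μ[x|𝒢]) 2 μ := memℒp_two_condexp h𝒢 hx2
  have hpy2 : MemLp (μ[y|𝒢]) 2 μ := memℒp_two_condexp h𝒢 hy2
  have hA : MemLp (fun ω => x ω - (μ[x|𝒢]) ω) 2 μ := hx2.sub hpx2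
  have hB : MemLp (fun ω => (μ[x|𝒢]) ω - (μ[y|𝒢]) ω) 2 μ := hpx2.sub hpy2
  have hC : MemLp (fun ω => y ω - (μ[y|𝒢]) ω) 2 μ := hy2.sub hpy2
  have hsplit : ∀ ω, (x ω - y ω) ^ 2
      = ((x ω - (μ[x|𝒢]) ω) ^ 2 + ((μ[x|𝒢]) ω - (μ[y|𝒢]) ω) ^ 2
          + (y ω - (μ[y|𝒢]) ω) ^ 2)
        + ((2 * (((μ[x|𝒢]) ω - (μ[y|𝒢]) ω) * (x ω - (μ[x|𝒢]) ω))
          - 2 * ((x ω - (μ[x|𝒢]) ω) * (y ω - (μ[y|𝒢]) ω)))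
          - 2 * (((μ[x|𝒢]) ω - (μ[y|𝒢]) ω) * (y ω - (μ[y|𝒢]) ω))) := fun ω => by ring
  have hsq : ∀ {f : Ω → ℝ}, MemLp f 2 μ → Integrable (fun ω => f ω ^ 2) μ := fun hf => int_sq hf
  have hAB : Integrable (fun ω => ((μ[x|𝒢]) ω - (μ[y|𝒢]) ω) * (x ω - (μ[x|𝒢]) ω)) μ := by
    simpa using integrable_mul₂ hB hA
  have hAC : Integrable (fun ω => (x ω - (μ[x|𝒢]) ω) * (y ω - (μ[y|𝒢]) ω)) μ := by
    simpa using integrable_mul₂ hA hC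
  have hBC : Integrable (fun ω => ((μ[x|𝒢]) ω - (μ[y|𝒢]) ω) * (y ω - (μ[y|𝒢]) ω)) μ := by
    simpa using integrable_mul₂ hB hC
  have z1 : ∫ ω, ((μ[x|𝒢]) ω - (μ[y|𝒢]) ω) * (x ω - (μ[x|𝒢]) ω) ∂μ = 0 :=
    orth h𝒢 (stronglyMeasurable_condExp.sub stronglyMeasurable_condExp) hB hx2
  have z3 : ∫ ω, ((μ[x|𝒢]) ω - (μ[y|𝒢]) ω) * (y ω - (μ[y|𝒢]) ω) ∂μ = 0 :=
    orth h𝒢 (stronglyMeasurable_condExp.sub stronglyMeasurable_condExp) hB hy2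
  have I1 : Integrable (fun ω => (x ω - (μ[x|𝒢]) ω) ^ 2 + ((μ[x|𝒢]) ω - (μ[y|𝒢]) ω) ^ 2
      + (y ω - (μ[y|𝒢]) ω) ^ 2) μ := by
    exact ((hsq hA).add (hsq hB)).add (hsq hC)
  have I1a : Integrable (fun ω => (x ω - (μ[x|𝒢]) ω) ^ 2
      + ((μ[x|𝒢]) ω - (μ[y|𝒢]) ω) ^ 2) μ := by
    exact (hsq hA).add (hsq hB)
  have I2 : Integrable (fun ω => 2 * (((μ[x|𝒢]) ω - (μ[y|𝒢]) ω) * (x ω - (μ[x|𝒢]) ω))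
      - 2 * ((x ω - (μ[x|𝒢]) ω) * (y ω - (μ[y|𝒢]) ω))) μ := by
    exact (hAB.const_mul 2).sub (hAC.const_mul 2)
  have I3 : Integrable (fun ω => (2 * (((μ[x|𝒢]) ω - (μ[y|𝒢]) ω) * (x ω - (μ[x|𝒢]) ω))
      - 2 * ((x ω - (μ[x|𝒢]) ω) * (y ω - (μ[y|𝒢]) ω)))
      - 2 * (((μ[x|𝒢]) ω - (μ[y|𝒢]) ω) * (y ω - (μ[y|𝒢]) ω))) μ := by
    exact I2.sub (hBC.const_mul 2)
  simp_rw [hsplit]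
  rw [integral_add I1 I3, integral_add I1a (hsq hC), integral_add (hsq hA) (hsq hB),
    integral_sub I2 (hBC.const_mul 2), integral_sub (hAB.const_mul 2) (hAC.const_mul 2),
    integral_const_mul, integral_const_mul, integral_const_mul, z1, z3, hcross]
  ring

lemma pyth2 (h𝒢 : 𝒢 ≤ mΩ) {y : Ω → ℝ} (hy2 : MemLp y 2 μ) (k : ℝ) :
    ∫ ω, (k - y ω) ^ 2 ∂μ
      = (∫ ω, ((μ[y|𝒢]) ω - k) ^ 2 ∂μ) + ∫ ω, (y ω - (μ[y|𝒢]) ω) ^ 2 ∂μ := by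
  have hpy2 : MemLp (μ[y|𝒢]) 2 μ := memℒp_two_condexp h𝒢 hy2
  have hB : MemLp (fun ω => (μ[y|𝒢]) ω - k) 2 μ := hpy2.sub (memLp_const k)
  have hC : MemLp (fun ω => y ω - (μ[y|𝒢]) ω) 2 μ := hy2.sub hpy2
  have hBC : Integrable (fun ω => ((μ[y|𝒢]) ω - k) * (y ω - (μ[y|𝒢]) ω)) μ := by
    simpa using integrable_mul₂ hB hC
  have z : ∫ ω, ((μ[y|𝒢]) ω - k) * (y ω - (μ[y|𝒢]) ω) ∂μ = 0 :=
    orth h𝒢 (stronglyMeasurable_condExp.sub stronglyMeasurable_const) hB hy2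
  have hsplit : ∀ ω, (k - y ω) ^ 2
      = (((μ[y|𝒢]) ω - k) ^ 2 + (y ω - (μ[y|𝒢]) ω) ^ 2)
        + 2 * (((μ[y|𝒢]) ω - k) * (y ω - (μ[y|𝒢]) ω)) := fun ω => by ring
  have I1 : Integrable (fun ω => ((μ[y|𝒢]) ω - k) ^ 2 + (y ω - (μ[y|𝒢]) ω) ^ 2) μ := by
    exact (int_sq hB).add (int_sq hC)
  simp_rw [hsplit]
  rw [integral_add I1 (hBC.const_mul 2), integral_add (int_sq hB) (int_sq hC),
    integral_const_mul, z]
  ring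

lemma integral_norm_sq_eq_sum {d : ℕ} {U : Ω → EuclideanSpace ℝ (Fin d)}
    (hU : MemLp U 2 μ) :
    ∫ ω, ‖U ω‖ ^ 2 ∂μ = ∑ i : Fin d, ∫ ω, (U ω i) ^ 2 ∂μ := by
  have hpt : ∀ ω, ‖U ω‖ ^ 2 = ∑ i : Fin d, (U ω i) ^ 2 := by
    intro ω
    rw [EuclideanSpace.norm_eq, Real.sq_sqrt (Finset.sum_nonneg fun i _ => sq_nonneg _)]
    simp [sq_abs]
  simp_rw [hpt]
  exact integral_finset_sum _ fun i _ => int_sq (memℒp_coord hU i)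

lemma integrable_norm_sq {E : Type*} [NormedAddCommGroup E] {U : Ω → E}
    (hU : MemLp U 2 μ) : Integrable (fun ω => ‖U ω‖ ^ 2) μ := by
  have h := hU.integrable_norm_rpow two_ne_zero ENNReal.ofNat_ne_top
  simp only [ENNReal.toReal_ofNat] at h
  refine h.congr (Filter.Eventually.of_forall fun ω => ?_)
  show ‖U ω‖ ^ ((2:ℕ):ℝ) = ‖U ω‖ ^ (2:ℕ)
  rw [Real.rpow_natCast]

end LongLeadAux

open LongLeadAux


/-- Long-lead degeneracy of mean-squared-error training
(Proposition 1). With `J m = E‖X_m − Y_m‖²` and `C m = E‖Y_m − E[Y_m|𝒢]‖²`, and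
assuming `X_m ⫫ Y_m | 𝒢` and `E[Y_m|𝒢] → c` in `L²`:
(i) if `J m − C m → 0` then `E‖X_m − E[X_m|𝒢]‖² → 0` and `E‖E[X_m|𝒢] − c‖² → 0`;
(ii) the constant deterministic forecast `≡ c` achieves `J m − C m → 0`. -/
theorem long_lead_mse_degeneracy
    {Ω : Type*} (𝒢 : MeasurableSpace Ω) {mΩ : MeasurableSpace Ω} (μ : Measure Ω) [IsProbabilityMeasure μ]
    (h𝒢 : 𝒢 ≤ mΩ) (d : ℕ)
    (X Y : ℕ → Ω → EuclideanSpace ℝ (Fin d))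
    (hXmeas : ∀ m, Measurable (X m)) (hYmeas : ∀ m, Measurable (Y m))
    (hX : ∀ m, MemLp (X m) 2 μ) (hY : ∀ m, MemLp (Y m) 2 μ)
    (hCI : ∀ m, ∀ f g : EuclideanSpace ℝ (Fin d) → ℝ, Measurable f → Measurable g →
      (∃ Cf, ∀ x, |f x| ≤ Cf) → (∃ Cg, ∀ x, |g x| ≤ Cg) →
      μ[fun ω => f (X m ω) * g (Y m ω) | 𝒢] =ᵐ[μ]
        fun ω => (μ[fun ω' => f (X m ω') | 𝒢]) ω * (μ[fun ω' => g (Y m ω') | 𝒢]) ω)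
    (c : EuclideanSpace ℝ (Fin d))
    (hclim : Tendsto (fun m => ∫ ω, ‖(μ[Y m | 𝒢]) ω - c‖ ^ 2 ∂μ) atTop (𝓝 0))
    (J C : ℕ → ℝ)
    (hJ : ∀ m, J m = ∫ ω, ‖X m ω - Y m ω‖ ^ 2 ∂μ)
    (hC : ∀ m, C m = ∫ ω, ‖Y m ω - (μ[Y m | 𝒢]) ω‖ ^ 2 ∂μ) :
    (Tendsto (fun m => J m - C m) atTop (𝓝 0) →
      Tendsto (fun m => ∫ ω, ‖X m ω - (μ[X m | 𝒢]) ω‖ ^ 2 ∂μ) atTop (𝓝 0) ∧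
      Tendsto (fun m => ∫ ω, ‖(μ[X m | 𝒢]) ω - c‖ ^ 2 ∂μ) atTop (𝓝 0)) ∧
    Tendsto (fun m => (∫ ω, ‖c - Y m ω‖ ^ 2 ∂μ) - C m) atTop (𝓝 0) := by
  haveI : IsFiniteMeasure (μ.trim h𝒢) := isFiniteMeasure_trim h𝒢
  have hPX2 : ∀ m, MemLp (μ[X m|𝒢]) 2 μ := fun m => memℒp_two_condexp h𝒢 (hX m)
  have hPY2 : ∀ m, MemLp (μ[Y m|𝒢]) 2 μ := fun m => memℒp_two_condexp h𝒢 (hY m)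
  have hXc : ∀ m i, (fun ω => (μ[X m|𝒢]) ω i) =ᵐ[μ] μ[fun ω => X m ω i|𝒢] :=
    fun m i => condexp_coord h𝒢 ((hX m).integrable one_le_two) i
  have hYc : ∀ m i, (fun ω => (μ[Y m|𝒢]) ω i) =ᵐ[μ] μ[fun ω => Y m ω i|𝒢] :=
    fun m i => condexp_coord h𝒢 ((hY m).integrable one_le_two) i
  -- key decomposition (i)
  have key1 : ∀ m, ∫ ω, ‖X m ω - Y m ω‖ ^ 2 ∂μ
      = (∫ ω, ‖X m ω - (μ[X m|𝒢]) ω‖ ^ 2 ∂μ)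
        + (∫ ω, ‖(μ[X m|𝒢]) ω - (μ[Y m|𝒢]) ω‖ ^ 2 ∂μ)
        + (∫ ω, ‖Y m ω - (μ[Y m|𝒢]) ω‖ ^ 2 ∂μ) := by
    intro m
    have m1 : MemLp (fun ω => X m ω - Y m ω) 2 μ := (hX m).sub (hY m)
    have m2 : MemLp (fun ω => X m ω - (μ[X m|𝒢]) ω) 2 μ := (hX m).sub (hPX2 m)
    have m3 : MemLp (fun ω => (μ[X m|𝒢]) ω - (μ[Y m|𝒢]) ω) 2 μ := (hPX2 m).sub (hPY2 m)
    have m4 : MemLp (fun ω => Y m ω - (μ[Y m|𝒢]) ω) 2 μ := (hY m).sub (hPY2 m)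
    rw [integral_norm_sq_eq_sum m1, integral_norm_sq_eq_sum m2,
      integral_norm_sq_eq_sum m3, integral_norm_sq_eq_sum m4,
      ← Finset.sum_add_distrib, ← Finset.sum_add_distrib]
    refine Finset.sum_congr rfl fun i _ => ?_
    simp only [PiLp.sub_apply]
    have e1 : ∫ ω, (X m ω i - (μ[X m|𝒢]) ω i) ^ 2 ∂μ
        = ∫ ω, (X m ω i - (μ[fun ω' => X m ω' i|𝒢]) ω) ^ 2 ∂μ :=
      integral_congr_ae (by filter_upwards [hXc m i] with ω h; rw [h])
    have e2 : ∫ ω, ((μ[X m|𝒢]) ω i - (μ[Y m|𝒢]) ω i) ^ 2 ∂μ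
        = ∫ ω, ((μ[fun ω' => X m ω' i|𝒢]) ω - (μ[fun ω' => Y m ω' i|𝒢]) ω) ^ 2 ∂μ :=
      integral_congr_ae (by filter_upwards [hXc m i, hYc m i] with ω h1 h2; rw [h1, h2])
    have e3 : ∫ ω, (Y m ω i - (μ[Y m|𝒢]) ω i) ^ 2 ∂μ
        = ∫ ω, (Y m ω i - (μ[fun ω' => Y m ω' i|𝒢]) ω) ^ 2 ∂μ :=
      integral_congr_ae (by filter_upwards [hYc m i] with ω h; rw [h])
    rw [e1, e2, e3]
    exact pyth h𝒢 (memℒp_coord (hX m) i) (memℒp_coord (hY m) i)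
      (ci_cross_zero h𝒢 (hXmeas m) (hYmeas m) (hX m) (hY m) (hCI m) i)
  -- key decomposition (ii)
  have key2 : ∀ m, ∫ ω, ‖c - Y m ω‖ ^ 2 ∂μ
      = (∫ ω, ‖(μ[Y m|𝒢]) ω - c‖ ^ 2 ∂μ)
        + ∫ ω, ‖Y m ω - (μ[Y m|𝒢]) ω‖ ^ 2 ∂μ := by
    intro m
    have m1 : MemLp (fun ω => c - Y m ω) 2 μ := (memLp_const c).sub (hY m)
    have m2 : MemLp (fun ω => (μ[Y m|𝒢]) ω - c) 2 μ := (hPY2 m).sub (memLp_const c)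
    have m4 : MemLp (fun ω => Y m ω - (μ[Y m|𝒢]) ω) 2 μ := (hY m).sub (hPY2 m)
    rw [integral_norm_sq_eq_sum m1, integral_norm_sq_eq_sum m2,
      integral_norm_sq_eq_sum m4,
      ← Finset.sum_add_distrib]
    refine Finset.sum_congr rfl fun i _ => ?_
    simp only [PiLp.sub_apply]
    have e1 : ∫ ω, ((μ[Y m|𝒢]) ω i - c i) ^ 2 ∂μ
        = ∫ ω, ((μ[fun ω' => Y m ω' i|𝒢]) ω - c i) ^ 2 ∂μ :=
      integral_congr_ae (by filter_upwards [hYc m i] with ω h; rw [h])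
    have e3 : ∫ ω, (Y m ω i - (μ[Y m|𝒢]) ω i) ^ 2 ∂μ
        = ∫ ω, (Y m ω i - (μ[fun ω' => Y m ω' i|𝒢]) ω) ^ 2 ∂μ :=
      integral_congr_ae (by filter_upwards [hYc m i] with ω h; rw [h])
    rw [e1, e3]
    exact pyth2 h𝒢 (memℒp_coord (hY m) i) (c i)
  constructor
  · intro hJC
    have hid : ∀ m, J m - C m
        = (∫ ω, ‖X m ω - (μ[X m|𝒢]) ω‖ ^ 2 ∂μ)
          + (∫ ω, ‖(μ[X m|𝒢]) ω - (μ[Y m|𝒢]) ω‖ ^ 2 ∂μ) := by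
      intro m
      rw [hJ m, hC m, key1 m]
      ring
    have hJC' : Tendsto (fun m => (∫ ω, ‖X m ω - (μ[X m|𝒢]) ω‖ ^ 2 ∂μ)
        + (∫ ω, ‖(μ[X m|𝒢]) ω - (μ[Y m|𝒢]) ω‖ ^ 2 ∂μ)) atTop (𝓝 0) := hJC.congr hid
    have hSnn : ∀ m, 0 ≤ ∫ ω, ‖X m ω - (μ[X m|𝒢]) ω‖ ^ 2 ∂μ :=
      fun m => integral_nonneg fun ω => by positivity
    have hMnn : ∀ m, 0 ≤ ∫ ω, ‖(μ[X m|𝒢]) ω - (μ[Y m|𝒢]) ω‖ ^ 2 ∂μ :=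
      fun m => integral_nonneg fun ω => by positivity
    have hS : Tendsto (fun m => ∫ ω, ‖X m ω - (μ[X m|𝒢]) ω‖ ^ 2 ∂μ) atTop (𝓝 0) :=
      tendsto_of_tendsto_of_tendsto_of_le_of_le tendsto_const_nhds hJC' hSnn
        (fun m => le_add_of_nonneg_right (hMnn m))
    have hM : Tendsto (fun m => ∫ ω, ‖(μ[X m|𝒢]) ω - (μ[Y m|𝒢]) ω‖ ^ 2 ∂μ) atTop (𝓝 0) :=
      tendsto_of_tendsto_of_tendsto_of_le_of_le tendsto_const_nhds hJC' hMnn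
        (fun m => le_add_of_nonneg_left (hSnn m))
    refine ⟨hS, ?_⟩
    have hbnd : ∀ m, ∫ ω, ‖(μ[X m|𝒢]) ω - c‖ ^ 2 ∂μ
        ≤ 2 * (∫ ω, ‖(μ[X m|𝒢]) ω - (μ[Y m|𝒢]) ω‖ ^ 2 ∂μ)
          + 2 * (∫ ω, ‖(μ[Y m|𝒢]) ω - c‖ ^ 2 ∂μ) := by
      intro m
      have hi1 : Integrable (fun ω => ‖(μ[X m|𝒢]) ω - (μ[Y m|𝒢]) ω‖ ^ 2) μ := by
        simpa using integrable_norm_sq ((hPX2 m).sub (hPY2 m))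
      have hi2 : Integrable (fun ω => ‖(μ[Y m|𝒢]) ω - c‖ ^ 2) μ := by
        simpa using integrable_norm_sq ((hPY2 m).sub (memLp_const c))
      have hint : Integrable (fun ω => 2 * ‖(μ[X m|𝒢]) ω - (μ[Y m|𝒢]) ω‖ ^ 2
          + 2 * ‖(μ[Y m|𝒢]) ω - c‖ ^ 2) μ := by
        exact (hi1.const_mul 2).add (hi2.const_mul 2)
      have hle : ∀ ω, ‖(μ[X m|𝒢]) ω - c‖ ^ 2
          ≤ 2 * ‖(μ[X m|𝒢]) ω - (μ[Y m|𝒢]) ω‖ ^ 2 + 2 * ‖(μ[Y m|𝒢]) ω - c‖ ^ 2 := by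
        intro ω
        have htri : ‖(μ[X m|𝒢]) ω - c‖
            ≤ ‖(μ[X m|𝒢]) ω - (μ[Y m|𝒢]) ω‖ + ‖(μ[Y m|𝒢]) ω - c‖ := by
          simpa using norm_add_le ((μ[X m|𝒢]) ω - (μ[Y m|𝒢]) ω) ((μ[Y m|𝒢]) ω - c)
        have h1 : ‖(μ[X m|𝒢]) ω - c‖ ^ 2
            ≤ (‖(μ[X m|𝒢]) ω - (μ[Y m|𝒢]) ω‖ + ‖(μ[Y m|𝒢]) ω - c‖) ^ 2 :=
          pow_le_pow_left₀ (norm_nonneg _) htri 2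
        nlinarith [h1, sq_nonneg (‖(μ[X m|𝒢]) ω - (μ[Y m|𝒢]) ω‖ - ‖(μ[Y m|𝒢]) ω - c‖)]
      calc ∫ ω, ‖(μ[X m|𝒢]) ω - c‖ ^ 2 ∂μ
          ≤ ∫ ω, (2 * ‖(μ[X m|𝒢]) ω - (μ[Y m|𝒢]) ω‖ ^ 2 + 2 * ‖(μ[Y m|𝒢]) ω - c‖ ^ 2) ∂μ :=
            integral_mono_of_nonneg (Filter.Eventually.of_forall fun ω => by positivity)
              hint (Filter.Eventually.of_forall hle)
        _ = 2 * (∫ ω, ‖(μ[X m|𝒢]) ω - (μ[Y m|𝒢]) ω‖ ^ 2 ∂μ)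
            + 2 * (∫ ω, ‖(μ[Y m|𝒢]) ω - c‖ ^ 2 ∂μ) := by
            rw [integral_add (hi1.const_mul 2) (hi2.const_mul 2),
              integral_const_mul, integral_const_mul]
    have hWnn : ∀ m, 0 ≤ ∫ ω, ‖(μ[X m|𝒢]) ω - c‖ ^ 2 ∂μ :=
      fun m => integral_nonneg fun ω => by positivity
    have hlim : Tendsto (fun m => 2 * (∫ ω, ‖(μ[X m|𝒢]) ω - (μ[Y m|𝒢]) ω‖ ^ 2 ∂μ)
        + 2 * (∫ ω, ‖(μ[Y m|𝒢]) ω - c‖ ^ 2 ∂μ)) atTop (𝓝 0) := by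
      have := (hM.const_mul (2:ℝ)).add (hclim.const_mul (2:ℝ))
      simpa using this
    exact tendsto_of_tendsto_of_tendsto_of_le_of_le tendsto_const_nhds hlim hWnn hbnd
  · have hid : ∀ m, (∫ ω, ‖(μ[Y m|𝒢]) ω - c‖ ^ 2 ∂μ)
        = (∫ ω, ‖c - Y m ω‖ ^ 2 ∂μ) - C m := by
      intro m
      rw [key2 m, hC m]
      ring
    exact hclim.congr hid
end

section
/- Let (X̄, d) be a complete separable metric space with base point x₀ and p ≥ 1. Let ℓ : X̄ × X̄ → ℝ be continuous and satisfy |ℓ(x, y)| ≤ C(1 + d(x, x₀)^p + d(y, x₀)^p) for some C > 0 and all x, y. Assume the expected-loss functional (P, Q) ↦ ∫∫ ℓ(x, y) dP(x) dQ(y) on 𝒫_p(X̄) × 𝒫_p(X̄) is sequentially jointly continuous with respect to W_p-convergence. Let μ̄ ∈ 𝒫_p(X̄), define the climatological risk R(c) := ∫ ℓ(c, y) dμ̄(y), and assume R has a unique global minimizer c* ∈ X̄. Let E be a measurable space with probability measure μ̄' equal to the law of initial conditions (taken as X̄ with law μ̄), and for each m ∈ ℕ let Q_m and P_m be Markov kernels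 from X̄ to X̄ with Q_m(x), P_m(x) ∈ 𝒫_p(X̄), and let P_∞ be a Markov kernel with P_∞(x) ∈ 𝒫_p(X̄). Assume: for μ̄-almost every x, Q_m(x) → μ̄ in W_p and P_m(x) → P_∞(x) in W_p as m → ∞; and the functions g_m(x) := ∫∫ ℓ(ỹ, ȳ) dP_m(x)(ỹ) dQ_m(x)(ȳ) are uniformly integrable with respect to μ̄. Then lim_{m→∞} ∫ g_m dμ̄ = ∫ (∫ R(ỹ) dP_∞(x)(ỹ)) dμ̄(x) ≥ R(c*), and equality with R(c*) holds if and only if P_∞(x) = δ_{c*} for μ̄-almost every x. (Supplementary Proposition 1: degeneracy of pointwise losses at long lead times.) -/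
open MeasureTheory ProbabilityTheory Filter Topology
open scoped BoundedContinuousFunction

/-- `ν ∈ 𝒫_p(X)`: a Borel probability measure with finite `p`-th moment about the
base point `x₀`. -/
def MemPp {X : Type*} [MetricSpace X] [MeasurableSpace X]
    (p : ℝ) (x₀ : X) (ν : Measure X) : Prop :=
  IsProbabilityMeasure ν ∧ Integrable (fun x => dist x x₀ ^ p) ν

/-- Weak convergence of measures: convergence of integrals of all bounded
continuous functions. -/
def WeakTendsto {X : Type*} [MetricSpace X] [MeasurableSpace X]
    (νs : ℕ → Measure X) (ν : Measure X) : Prop :=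
  ∀ f : X →ᵇ ℝ, Tendsto (fun m => ∫ x, f x ∂(νs m)) atTop (𝓝 (∫ x, f x ∂ν))

/-- Convergence in the Wasserstein-`p` sense: weak convergence together with
convergence of `p`-th moments about the base point `x₀`. -/
def WpTendsto {X : Type*} [MetricSpace X] [MeasurableSpace X]
    (p : ℝ) (x₀ : X) (νs : ℕ → Measure X) (ν : Measure X) : Prop :=
  WeakTendsto νs ν ∧
    Tendsto (fun m => ∫ x, dist x x₀ ^ p ∂(νs m)) atTop (𝓝 (∫ x, dist x x₀ ^ p ∂ν))

/-!
By joint `W_p`-continuity of the expected loss, `g_m(x) → ∫∫ ℓ dP_∞(x) dμ̄ = ∫ R dP_∞(x)` for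
`μ̄`-a.e. `x` (Fubini applies thanks to the growth bound on `ℓ`), and Vitali's convergence theorem
upgrades this to convergence of `∫ g_m dμ̄`. Since `R ≥ R(c*)` with equality only at `c*`, the limit
is at least `R(c*)`, with equality iff `∫ R dP_∞(x) = R(c*)` for a.e. `x`, i.e. iff `P_∞(x)` puts
all its mass on `c*`.
-/

open scoped NNReal

theorem le_apply_of_forall_ne_lt {α β : Type*} [Preorder β] {f : α → β} {c : α}
    (h : ∀ y ≠ c, f c < f y) (y : α) : f c ≤ f y :=
  (eq_or_ne y c).elim (fun hy => hy ▸ le_rfl) fun hy => (h y hy).le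

namespace MeasureTheory

variable {α ι : Type*} [MeasurableSpace α] {μ : Measure α}

theorem uniformIntegrable_of_setIntegral_abs_ge_le [IsFiniteMeasure μ] {f : ι → α → ℝ}
    (hf : ∀ i, Integrable (f i) μ)
    (h : ∀ ε > 0, ∃ K : ℝ, ∀ i, ∫ x in {x | K ≤ |f i x|}, |f i x| ∂μ ≤ ε) :
    UniformIntegrable f 1 μ := by
  refine uniformIntegrable_of le_rfl ENNReal.one_ne_top (fun i => (hf i).1) fun ε hε => ?_
  obtain ⟨K, hK⟩ := h ε hε
  refine ⟨K.toNNReal, fun i => ?_⟩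
  have hset : {x | (K.toNNReal : ℝ≥0) ≤ ‖f i x‖₊} = {x | K ≤ |f i x|} := by
    ext x
    simp only [Set.mem_ofPred_eq, ← NNReal.coe_le_coe, coe_nnnorm, Real.norm_eq_abs,
      Real.coe_toNNReal']
    exact max_le_iff.trans (and_iff_left (abs_nonneg _))
  rw [hset, eLpNorm_one_eq_lintegral_enorm]
  calc ∫⁻ x, ‖{x | K ≤ |f i x|}.indicator (f i) x‖ₑ ∂μ
      = ∫⁻ x, {x | K ≤ |f i x|}.indicator (fun x => ‖f i x‖ₑ) x ∂μ := by
        simp only [enorm_indicator_eq_indicator_enorm]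
    _ ≤ ∫⁻ x in {x | K ≤ |f i x|}, ‖f i x‖ₑ ∂μ := lintegral_indicator_le _ _
    _ = ENNReal.ofReal (∫ x in {x | K ≤ |f i x|}, |f i x| ∂μ) :=
        (ofReal_integral_norm_eq_lintegral_enorm (hf i).restrict).symm
    _ ≤ ENNReal.ofReal ε := ENNReal.ofReal_le_ofReal (hK i)

theorem UniformIntegrable.tendsto_integral_of_tendsto_ae [IsFiniteMeasure μ] {f : ℕ → α → ℝ}
    {g : α → ℝ} (hf : UniformIntegrable f 1 μ)
    (hfg : ∀ᵐ x ∂μ, Tendsto (fun n => f n x) atTop (𝓝 (g x))) :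
    Tendsto (fun n => ∫ x, f n x ∂μ) atTop (𝓝 (∫ x, g x ∂μ)) := by
  have hg : Integrable g μ := hf.integrable_of_ae_tendsto hfg
  refine tendsto_integral_of_L1' g hg.1
    (Eventually.of_forall fun n => memLp_one_iff_integrable.1 (hf.memLp n)) ?_
  exact tendsto_Lp_finite_of_tendsto_ae le_rfl ENNReal.one_ne_top hf.1
    (memLp_one_iff_integrable.2 hg) hf.2.1 hfg

theorem integral_eq_const_iff_ae_eq_of_le [IsProbabilityMeasure μ] {f : α → ℝ} {c : ℝ}
    (hf : Integrable f μ) (hc : ∀ x, c ≤ f x) :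
    ∫ x, f x ∂μ = c ↔ f =ᵐ[μ] fun _ => c := by
  have hsub : ∫ x, (f x - c) ∂μ = ∫ x, f x ∂μ - c := by
    rw [integral_sub hf (integrable_const c), integral_const, probReal_univ, one_smul]
  rw [← sub_eq_zero, ← hsub, integral_eq_zero_iff_of_nonneg (fun x => sub_nonneg.2 (hc x))
    (hf.sub (integrable_const c))]
  exact Filter.eventually_congr (Eventually.of_forall fun x => sub_eq_zero)

theorem Measure.eq_dirac_iff_ae_eq [MeasurableSingletonClass α] [IsProbabilityMeasure μ]
    {a : α} : μ = Measure.dirac a ↔ ∀ᵐ x ∂μ, x = a := by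
  refine ⟨fun h => h ▸ by simp [ae_dirac_eq], fun h => ?_⟩
  have hμa : μ {a} = 1 := (prob_compl_eq_zero_iff (measurableSet_singleton a)).1 (ae_iff.1 h)
  rw [← Measure.restrict_eq_self_of_ae_mem (s := {a}) h, Measure.restrict_singleton, hμa, one_smul]

theorem const_le_integral_of_le [IsProbabilityMeasure μ] {f : α → ℝ} {c : ℝ}
    (hf : Integrable f μ) (hc : ∀ x, c ≤ f x) : c ≤ ∫ x, f x ∂μ :=
  calc c = ∫ _, c ∂μ := by simp
    _ ≤ ∫ x, f x ∂μ := integral_mono (integrable_const c) hf hc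

theorem integral_eq_apply_iff_eq_dirac [MeasurableSingletonClass α] [IsProbabilityMeasure μ]
    {f : α → ℝ} {c : α} (hf : Integrable f μ) (hmin : ∀ y ≠ c, f c < f y) :
    ∫ x, f x ∂μ = f c ↔ μ = Measure.dirac c := by
  rw [integral_eq_const_iff_ae_eq_of_le hf (le_apply_of_forall_ne_lt hmin), Measure.eq_dirac_iff_ae_eq]
  refine Filter.eventually_congr (Eventually.of_forall fun y => ⟨fun hy => ?_, fun hy => hy ▸ rfl⟩)
  by_contra hne
  exact (hmin y hne).ne' hy

end MeasureTheory

theorem MemPp.integrable_uncurry_of_abs_le {X : Type*} [MetricSpace X] [MeasurableSpace X]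
    {p : ℝ} {x₀ : X} {ν κ : Measure X} (hν : MemPp p x₀ ν) (hκ : MemPp p x₀ κ)
    {ℓ : X → X → ℝ} (hℓ : StronglyMeasurable (Function.uncurry ℓ)) {C : ℝ}
    (hgrowth : ∀ x y, |ℓ x y| ≤ C * (1 + dist x x₀ ^ p + dist y x₀ ^ p)) :
    Integrable (Function.uncurry ℓ) (ν.prod κ) := by
  have := hν.1
  have := hκ.1
  have hbound : Integrable (fun z : X × X => C * (1 + dist z.1 x₀ ^ p + dist z.2 x₀ ^ p))
      (ν.prod κ) :=
    (((integrable_const 1).add (hν.2.comp_fst κ)).add (hκ.2.comp_snd ν)).const_mul C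
  exact hbound.mono' hℓ.aestronglyMeasurable (ae_of_all _ fun z => hgrowth z.1 z.2)

theorem pointwise_loss_long_lead_degeneracy_general
    {X : Type*} [MetricSpace X] [TopologicalSpace.SeparableSpace X]
    [MeasurableSpace X] [BorelSpace X]
    (x₀ : X) (p : ℝ)
    (ℓ : X → X → ℝ) (hℓcont : Continuous (Function.uncurry ℓ))
    (C : ℝ)
    (hgrowth : ∀ x y, |ℓ x y| ≤ C * (1 + dist x x₀ ^ p + dist y x₀ ^ p))
    (hcont : ∀ (Ps Qs : ℕ → Measure X) (P Q : Measure X),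
      (∀ m, MemPp p x₀ (Ps m)) → (∀ m, MemPp p x₀ (Qs m)) →
      MemPp p x₀ P → MemPp p x₀ Q →
      WpTendsto p x₀ Ps P → WpTendsto p x₀ Qs Q →
      Tendsto (fun m => ∫ y, ∫ x, ℓ x y ∂(Ps m) ∂(Qs m)) atTop
        (𝓝 (∫ y, ∫ x, ℓ x y ∂P ∂Q)))
    (μbar : Measure X) (hμbar : MemPp p x₀ μbar)
    (Q P : ℕ → Kernel X X)
    (Pinf : Kernel X X) (hPinfmarkov : IsMarkovKernel Pinf)
    (hQmom : ∀ m x, MemPp p x₀ (Q m x)) (hPmom : ∀ m x, MemPp p x₀ (P m x))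
    (hPinfmom : ∀ x, MemPp p x₀ (Pinf x))
    (hQconv : ∀ᵐ x ∂μbar, WpTendsto p x₀ (fun m => Q m x) μbar)
    (hPconv : ∀ᵐ x ∂μbar, WpTendsto p x₀ (fun m => P m x) (Pinf x))
    (g : ℕ → X → ℝ)
    (hg : ∀ m x, g m x = ∫ yb, ∫ yt, ℓ yt yb ∂(P m x) ∂(Q m x))
    (hgint : ∀ m, Integrable (g m) μbar)
    (hUI : ∀ ε > 0, ∃ K > (0 : ℝ), ∀ m, ∫ x in {x | K ≤ |g m x|}, |g m x| ∂μbar ≤ ε)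
    (R : X → ℝ) (hR : ∀ c, R c = ∫ y, ℓ c y ∂μbar)
    (cstar : X) (hmin : ∀ c ≠ cstar, R cstar < R c) :
    Tendsto (fun m => ∫ x, g m x ∂μbar) atTop
        (𝓝 (∫ x, ∫ y, R y ∂(Pinf x) ∂μbar)) ∧
    R cstar ≤ ∫ x, ∫ y, R y ∂(Pinf x) ∂μbar ∧
    ((∫ x, ∫ y, R y ∂(Pinf x) ∂μbar = R cstar) ↔
      ∀ᵐ x ∂μbar, Pinf x = Measure.dirac cstar) := by
  have := hμbar.1
  have hℓint : ∀ x, Integrable (Function.uncurry ℓ) ((Pinf x).prod μbar) := fun x =>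
    (hPinfmom x).integrable_uncurry_of_abs_le hμbar hℓcont.stronglyMeasurable
      hgrowth
  have hRint : ∀ x, Integrable R (Pinf x) := fun x => by
    rw [funext hR]
    exact (hℓint x).integral_prod_left
  have hRswap : ∀ x, ∫ y, R y ∂(Pinf x) = ∫ yb, ∫ yt, ℓ yt yb ∂(Pinf x) ∂μbar := fun x => by
    simpa only [hR] using integral_integral_swap (hℓint x)
  have hae : ∀ᵐ x ∂μbar, Tendsto (fun m => g m x) atTop (𝓝 (∫ y, R y ∂(Pinf x))) := by
    filter_upwards [hQconv, hPconv] with x hQx hPx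
    simpa only [hg, hRswap] using hcont _ _ _ _ (fun m => hPmom m x) (fun m => hQmom m x)
      (hPinfmom x) hμbar hPx hQx
  have hgUI : UniformIntegrable g 1 μbar :=
    uniformIntegrable_of_setIntegral_abs_ge_le hgint fun ε hε => (hUI ε hε).imp fun _ hK => hK.2
  have hlow : ∀ x, R cstar ≤ ∫ y, R y ∂(Pinf x) := fun x =>
    const_le_integral_of_le (hRint x) (le_apply_of_forall_ne_lt hmin)
  have hlimint : Integrable (fun x => ∫ y, R y ∂(Pinf x)) μbar :=
    hgUI.integrable_of_ae_tendsto hae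
  refine ⟨hgUI.tendsto_integral_of_tendsto_ae hae, const_le_integral_of_le hlimint hlow, ?_⟩
  rw [integral_eq_const_iff_ae_eq_of_le hlimint hlow]
  exact Filter.eventually_congr (Eventually.of_forall fun x =>
    integral_eq_apply_iff_eq_dirac (hRint x) hmin)

/-- Supplementary Proposition 1: degeneracy of pointwise losses
at long lead times. Under `W_p` decorrelation of the true conditional laws toward
the invariant measure `μ̄`, `W_p` convergence of the model predictive laws, joint
`W_p` continuity of the expected-loss functional, and uniform integrability of the
conditional expected losses `g_m`, the time-`m` expected pointwise losses converge
to `∫∫ R dP_∞(x) dμ̄(x) ≥ R(c*)`, with equality iff `P_∞(x) = δ_{c*}` for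
`μ̄`-a.e. `x`. -/
theorem pointwise_loss_long_lead_degeneracy
    {X : Type*} [MetricSpace X] [CompleteSpace X] [TopologicalSpace.SeparableSpace X]
    [MeasurableSpace X] [BorelSpace X]
    (x₀ : X) (p : ℝ) (hp : 1 ≤ p)
    (ℓ : X → X → ℝ) (hℓcont : Continuous (Function.uncurry ℓ))
    (C : ℝ) (hC : 0 < C)
    (hgrowth : ∀ x y, |ℓ x y| ≤ C * (1 + dist x x₀ ^ p + dist y x₀ ^ p))
    (hcont : ∀ (Ps Qs : ℕ → Measure X) (P Q : Measure X),
      (∀ m, MemPp p x₀ (Ps m)) → (∀ m, MemPp p x₀ (Qs m)) →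
      MemPp p x₀ P → MemPp p x₀ Q →
      WpTendsto p x₀ Ps P → WpTendsto p x₀ Qs Q →
      Tendsto (fun m => ∫ y, ∫ x, ℓ x y ∂(Ps m) ∂(Qs m)) atTop
        (𝓝 (∫ y, ∫ x, ℓ x y ∂P ∂Q)))
    (μbar : Measure X) (hμbar : MemPp p x₀ μbar)
    (Q P : ℕ → Kernel X X)
    (hQmarkov : ∀ m, IsMarkovKernel (Q m)) (hPmarkov : ∀ m, IsMarkovKernel (P m))
    (Pinf : Kernel X X) (hPinfmarkov : IsMarkovKernel Pinf)
    (hQmom : ∀ m x, MemPp p x₀ (Q m x)) (hPmom : ∀ m x, MemPp p x₀ (P m x))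
    (hPinfmom : ∀ x, MemPp p x₀ (Pinf x))
    (hQconv : ∀ᵐ x ∂μbar, WpTendsto p x₀ (fun m => Q m x) μbar)
    (hPconv : ∀ᵐ x ∂μbar, WpTendsto p x₀ (fun m => P m x) (Pinf x))
    (g : ℕ → X → ℝ)
    (hg : ∀ m x, g m x = ∫ yb, ∫ yt, ℓ yt yb ∂(P m x) ∂(Q m x))
    (hgint : ∀ m, Integrable (g m) μbar)
    (hUI : ∀ ε > 0, ∃ K > (0 : ℝ), ∀ m, ∫ x in {x | K ≤ |g m x|}, |g m x| ∂μbar ≤ ε)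
    (R : X → ℝ) (hR : ∀ c, R c = ∫ y, ℓ c y ∂μbar)
    (cstar : X) (hmin : ∀ c ≠ cstar, R cstar < R c) :
    Tendsto (fun m => ∫ x, g m x ∂μbar) atTop
        (𝓝 (∫ x, ∫ y, R y ∂(Pinf x) ∂μbar)) ∧
    R cstar ≤ ∫ x, ∫ y, R y ∂(Pinf x) ∂μbar ∧
    ((∫ x, ∫ y, R y ∂(Pinf x) ∂μbar = R cstar) ↔
      ∀ᵐ x ∂μbar, Pinf x = Measure.dirac cstar) :=
  pointwise_loss_long_lead_degeneracy_general x₀ p ℓ hℓcont C hgrowth hcont μbar hμbar Q P Pinf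
    hPinfmarkov hQmom hPmom hPinfmom hQconv hPconv g hg hgint hUI R hR cstar hmin
end

section
/- Let (X̄, d) be a complete separable metric space and let 𝒫₂(X̄) be the Borel probability measures with finite second moment, with W₂-convergence defined as weak convergence together with convergence of second moments. Let S : 𝒫₂(X̄) × X̄ → ℝ be a strictly proper scoring rule, and assume the expected-score functional (P, Q) ↦ E_{y∼Q}[S(P, y)] is sequentially jointly continuous with respect to W₂-convergence in both arguments. Let μ̄ ∈ 𝒫₂(X̄). For each m ∈ ℕ let Q_m and P̃_m be Markov kernels from X̄ to X̄ with values in 𝒫₂(X̄), and let P̃_∞ be a Markov kernel with values in 𝒫₂(X̄). Assume: for μ̄-almost every x, Q_m(x) → μ̄ in W₂ and P̃_m(x) → P̃_∞(x) in W₂ as m → ∞; and the functions f_m(x) := E_{y∼Q_m(x)}[S(P̃_m(x), y)] are uniformly integrable with respect to μ̄. Then lim_{m→∞} ∫ f_m dμ̄ = ∫ d_S(P̃_∞(x), μ̄) dμ̄(x) + E_{y∼μ̄}[S(μ̄, y)], where d_S(P, Q) := E_{y∼Q}[S(P, y)] − E_{y∼Q}[S(Q, y)] is the divergence induced by S. In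 particular, the parameter-dependent part of the asymptotic objective is exactly the expected divergence between the model's long-lead predictive law and the invariant measure. (Proposition 2: asymptotic consistency of strictly proper scoring rules.) -/
/-!
The expected score `f m x = E_{y ∼ Q_m(x)} S(P̃_m(x), y)` converges for `μ̄`-a.e. `x` to
`E_{y ∼ μ̄} S(P̃_∞(x), y)` by joint `W₂`-continuity of the expected score. Uniform integrability
upgrades this a.e. convergence to convergence of the `μ̄`-integrals (Vitali), and since `μ̄` is a
probability measure, subtracting and re-adding `E_{y ∼ μ̄} S(μ̄, y)` splits the limit into the
expected divergence plus the entropy term.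
-/

open MeasureTheory ProbabilityTheory Filter Topology
open scoped BoundedContinuousFunction

/-- `ν ∈ 𝒫₂(X)`: a Borel probability measure with finite second moment about the
base point `x₀`. -/
def MemP2 {X : Type*} [MetricSpace X] [MeasurableSpace X]
    (x₀ : X) (ν : Measure X) : Prop :=
  IsProbabilityMeasure ν ∧ Integrable (fun x => dist x x₀ ^ 2) ν

def W2Tendsto {X : Type*} [MetricSpace X] [MeasurableSpace X]
    (x₀ : X) (νs : ℕ → Measure X) (ν : Measure X) : Prop :=
  WeakTendsto νs ν ∧
    Tendsto (fun m => ∫ x, dist x x₀ ^ 2 ∂(νs m)) atTop (𝓝 (∫ x, dist x x₀ ^ 2 ∂ν))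

namespace MeasureTheory

variable {α ι : Type*} [MeasurableSpace α] {μ : Measure α}

theorem uniformIntegrable_one_of_setIntegral_abs_le [IsFiniteMeasure μ] {f : ι → α → ℝ}
    (hf : ∀ i, Integrable (f i) μ)
    (hUI : ∀ ε > 0, ∃ K : ℝ, ∀ i, ∫ x in {x | K ≤ |f i x|}, |f i x| ∂μ ≤ ε) :
    UniformIntegrable f 1 μ := by
  refine uniformIntegrable_of le_rfl ENNReal.one_ne_top (fun i => (hf i).1) fun ε hε => ?_
  obtain ⟨K, hK⟩ := hUI ε hε
  refine ⟨K.toNNReal, fun i => ?_⟩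
  have hset : {x | K.toNNReal ≤ ‖f i x‖₊} = {x | K ≤ |f i x|} := by
    ext x
    simp [Real.toNNReal_le_iff_le_coe, Real.norm_eq_abs]
  have hmeas : NullMeasurableSet {x | K ≤ |f i x|} μ :=
    aestronglyMeasurable_const.nullMeasurableSet_le (hf i).1.norm
  calc eLpNorm ({x | K.toNNReal ≤ ‖f i x‖₊}.indicator (f i)) 1 μ
      = ∫⁻ x in {x | K ≤ |f i x|}, ‖f i x‖ₑ ∂μ := by
        rw [hset, eLpNorm_one_eq_lintegral_enorm]
        simp_rw [enorm_indicator_eq_indicator_enorm]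
        exact lintegral_indicator₀ hmeas _
    _ = ENNReal.ofReal (∫ x in {x | K ≤ |f i x|}, |f i x| ∂μ) :=
        (ofReal_integral_norm_eq_lintegral_enorm (hf i).restrict).symm
    _ ≤ ENNReal.ofReal ε := ENNReal.ofReal_le_ofReal (hK i)

theorem UniformIntegrable.tendsto_integral_of_ae_tendsto [IsFiniteMeasure μ]
    {E : Type*} [NormedAddCommGroup E] [NormedSpace ℝ E] {f : ℕ → α → E} {g : α → E}
    (hUI : UniformIntegrable f 1 μ)
    (hfg : ∀ᵐ x ∂μ, Tendsto (fun n => f n x) atTop (𝓝 (g x))) :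
    Tendsto (fun n => ∫ x, f n x ∂μ) atTop (𝓝 (∫ x, g x ∂μ)) := by
  have hg : MemLp g 1 μ := hUI.memLp_of_ae_tendsto hfg
  refine tendsto_integral_of_L1' g hg.1
    (Eventually.of_forall fun n => memLp_one_iff_integrable.1 (hUI.memLp n)) ?_
  exact tendsto_Lp_finite_of_tendsto_ae le_rfl ENNReal.one_ne_top hUI.1 hg hUI.2.1 hfg

end MeasureTheory

theorem strictly_proper_score_asymptotic_consistency_general
    {X : Type*} [MetricSpace X] [MeasurableSpace X]
    (x₀ : X) (S : Measure X → X → ℝ)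
    (hcont : ∀ (Ps Qs : ℕ → Measure X) (P Q : Measure X),
      (∀ m, MemP2 x₀ (Ps m)) → (∀ m, MemP2 x₀ (Qs m)) →
      MemP2 x₀ P → MemP2 x₀ Q →
      W2Tendsto x₀ Ps P → W2Tendsto x₀ Qs Q →
      Tendsto (fun m => ∫ y, S (Ps m) y ∂(Qs m)) atTop (𝓝 (∫ y, S P y ∂Q)))
    (μbar : Measure X) (hμbar : MemP2 x₀ μbar)
    (Q Pt : ℕ → Kernel X X)
    (Ptinf : Kernel X X)
    (hQmom : ∀ m x, MemP2 x₀ (Q m x)) (hPtmom : ∀ m x, MemP2 x₀ (Pt m x))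
    (hPtinfmom : ∀ x, MemP2 x₀ (Ptinf x))
    (hQconv : ∀ᵐ x ∂μbar, W2Tendsto x₀ (fun m => Q m x) μbar)
    (hPtconv : ∀ᵐ x ∂μbar, W2Tendsto x₀ (fun m => Pt m x) (Ptinf x))
    (f : ℕ → X → ℝ)
    (hf : ∀ m x, f m x = ∫ y, S (Pt m x) y ∂(Q m x))
    (hfint : ∀ m, Integrable (f m) μbar)
    (hUI : ∀ ε > 0, ∃ K > (0 : ℝ), ∀ m, ∫ x in {x | K ≤ |f m x|}, |f m x| ∂μbar ≤ ε) :
    Tendsto (fun m => ∫ x, f m x ∂μbar) atTop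
      (𝓝 ((∫ x, ((∫ y, S (Ptinf x) y ∂μbar) - ∫ y, S μbar y ∂μbar) ∂μbar)
            + ∫ y, S μbar y ∂μbar)) := by
  have : IsProbabilityMeasure μbar := hμbar.1
  have hlim : ∀ᵐ x ∂μbar, Tendsto (fun m => f m x) atTop (𝓝 (∫ y, S (Ptinf x) y ∂μbar)) := by
    filter_upwards [hQconv, hPtconv] with x hQx hPtx
    simpa only [hf] using hcont _ _ _ _ (fun m => hPtmom m x) (fun m => hQmom m x)
      (hPtinfmom x) hμbar hPtx hQx
  have hfUI : UniformIntegrable f 1 μbar :=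
    uniformIntegrable_one_of_setIntegral_abs_le hfint fun ε hε => (hUI ε hε).imp fun _ hK => hK.2
  rw [integral_sub (hfUI.integrable_of_ae_tendsto hlim) (integrable_const _), integral_const,
    probReal_univ, one_smul, sub_add_cancel]
  exact hfUI.tendsto_integral_of_ae_tendsto hlim

/-- Proposition 2: asymptotic consistency of strictly proper
scoring rules. If the true conditional laws `Q_m(x)` converge in `W₂` to the
invariant measure `μ̄` and the model predictive laws `P̃_m(x)` converge in `W₂` to
`P̃_∞(x)` for `μ̄`-a.e. `x`, the expected-score functional is jointly sequentially
`W₂`-continuous, and the conditional expected scores `f_m` are uniformly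
integrable, then
`lim_m ∫ f_m dμ̄ = ∫ d_S(P̃_∞(x), μ̄) dμ̄(x) + E_{y∼μ̄}[S(μ̄, y)]`,
where `d_S(P, Q) = E_{y∼Q}[S(P, y)] − E_{y∼Q}[S(Q, y)]`. -/
theorem strictly_proper_score_asymptotic_consistency
    {X : Type*} [MetricSpace X] [CompleteSpace X] [TopologicalSpace.SeparableSpace X]
    [MeasurableSpace X] [BorelSpace X]
    (x₀ : X) (S : Measure X → X → ℝ)
    (hSint : ∀ P Q : Measure X, MemP2 x₀ P → MemP2 x₀ Q → Integrable (fun y => S P y) Q)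
    (hproper : ∀ P Q : Measure X, MemP2 x₀ P → MemP2 x₀ Q →
      (∫ y, S Q y ∂Q) ≤ ∫ y, S P y ∂Q ∧
      ((∫ y, S P y ∂Q = ∫ y, S Q y ∂Q) ↔ P = Q))
    (hcont : ∀ (Ps Qs : ℕ → Measure X) (P Q : Measure X),
      (∀ m, MemP2 x₀ (Ps m)) → (∀ m, MemP2 x₀ (Qs m)) →
      MemP2 x₀ P → MemP2 x₀ Q →
      W2Tendsto x₀ Ps P → W2Tendsto x₀ Qs Q →
      Tendsto (fun m => ∫ y, S (Ps m) y ∂(Qs m)) atTop (𝓝 (∫ y, S P y ∂Q)))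
    (μbar : Measure X) (hμbar : MemP2 x₀ μbar)
    (Q Pt : ℕ → Kernel X X)
    (hQmarkov : ∀ m, IsMarkovKernel (Q m)) (hPtmarkov : ∀ m, IsMarkovKernel (Pt m))
    (Ptinf : Kernel X X) (hPtinfmarkov : IsMarkovKernel Ptinf)
    (hQmom : ∀ m x, MemP2 x₀ (Q m x)) (hPtmom : ∀ m x, MemP2 x₀ (Pt m x))
    (hPtinfmom : ∀ x, MemP2 x₀ (Ptinf x))
    (hQconv : ∀ᵐ x ∂μbar, W2Tendsto x₀ (fun m => Q m x) μbar)
    (hPtconv : ∀ᵐ x ∂μbar, W2Tendsto x₀ (fun m => Pt m x) (Ptinf x))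
    (f : ℕ → X → ℝ)
    (hf : ∀ m x, f m x = ∫ y, S (Pt m x) y ∂(Q m x))
    (hfint : ∀ m, Integrable (f m) μbar)
    (hUI : ∀ ε > 0, ∃ K > (0 : ℝ), ∀ m, ∫ x in {x | K ≤ |f m x|}, |f m x| ∂μbar ≤ ε) :
    Tendsto (fun m => ∫ x, f m x ∂μbar) atTop
      (𝓝 ((∫ x, ((∫ y, S (Ptinf x) y ∂μbar) - ∫ y, S μbar y ∂μbar) ∂μbar)
            + ∫ y, S μbar y ∂μbar)) :=
  strictly_proper_score_asymptotic_consistency_general x₀ S hcont μbar hμbar Q Pt Ptinf hQmom hPtmom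
    hPtinfmom hQconv hPtconv f hf hfint hUI
end
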